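/- arXiv:1301.7304 — 3 statements merged into one kernel-verified Lean document; each statement's English description precedes it below -/
import Mathlib

section
/- For a compact group G, the partial order on conjugacy classes of closed subgroups is antisymmetric: if there exist g₁, g₂ ∈ G with g₁Hg₁⁻¹ ⊆ K and g₂Kg₂⁻¹ ⊆ H for closed subgroups H, K of a compact Lie group G, then H and K are conjugate. -/
open Filter Set

theorem conj_eq_of_conj_le {G : Type*} [Group G] [TopologicalSpace G] [IsTopologicalGroup G]
    [CompactSpace G] (H : Subgroup G) (hH : IsClosed (H : Set G)) (c : G)
    (h : H.map (MulAut.conj c).toMonoidHom ≤ H) :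
    H.map (MulAut.conj c).toMonoidHom = H := by
  refine le_antisymm h fun x hx => ?_
  -- suffices: c⁻¹ * x * c ∈ H
  suffices hc : c⁻¹ * x * c ∈ H by
    exact ⟨c⁻¹ * x * c, hc, by simp [mul_assoc]⟩
  have key : ∀ n : ℕ, c ^ n * x * (c ^ n)⁻¹ ∈ H := by
    intro n
    induction n with
    | zero => simpa using hx
    | succ n ih =>
      have := h ⟨_, ih, rfl⟩
      simpa [pow_succ', mul_assoc] using this
  have hcl : MapClusterPt c⁻¹ atTop (fun n : ℕ => c ^ n) := by
    simpa using mapClusterPt_self_zpow_atTop_pow c (-1)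
  have hcont : ContinuousAt (fun z : G => z * x * z⁻¹) c⁻¹ := by fun_prop
  have h2 : MapClusterPt (c⁻¹ * x * (c⁻¹)⁻¹) atTop
      (fun n : ℕ => c ^ n * x * (c ^ n)⁻¹) := by
    simpa [Function.comp_def] using hcl.continuousAt_comp hcont
  have h3 : (c⁻¹ * x * (c⁻¹)⁻¹) ∈ closure (H : Set G) := by
    rw [mem_closure_iff_clusterPt]
    exact ClusterPt.mono h2 (le_principal_iff.2 (mem_map.2 (Eventually.of_forall key)))
  rw [hH.closure_eq] at h3
  simpa using h3

/-- Antisymmetry of the partial order on conjugacy classes of closed subgroups of a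
compact Lie group: if `g₁ H g₁⁻¹ ⊆ K` and `g₂ K g₂⁻¹ ⊆ H` for closed subgroups `H, K`
of a compact Lie group `G`, then `H` and `K` are conjugate. -/
theorem conj_le_antisymm_of_compactLieGroup
    {E : Type*} [NormedAddCommGroup E] [NormedSpace ℝ E] [FiniteDimensional ℝ E]
    {G : Type*} [TopologicalSpace G] [ChartedSpace E G] [Group G]
    [LieGroup (modelWithCornersSelf ℝ E) (⊤ : ℕ∞) G] [CompactSpace G]
    (H K : Subgroup G) (hH : IsClosed (H : Set G)) (hK : IsClosed (K : Set G))
    (g₁ g₂ : G)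
    (h₁ : H.map (MulAut.conj g₁).toMonoidHom ≤ K)
    (h₂ : K.map (MulAut.conj g₂).toMonoidHom ≤ H) :
    ∃ g : G, H.map (MulAut.conj g).toMonoidHom = K := by
  haveI : IsTopologicalGroup G := topologicalGroup_of_lieGroup (I := modelWithCornersSelf ℝ E) (n := (⊤ : ℕ∞))
  refine ⟨g₁, le_antisymm h₁ ?_⟩
  have hcomp : ((H.map (MulAut.conj g₁).toMonoidHom).map (MulAut.conj g₂).toMonoidHom)
      = H.map (MulAut.conj (g₂ * g₁)).toMonoidHom := by
    rw [Subgroup.map_map]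
    congr 1
    ext x
    simp [mul_assoc]
  have hle : H.map (MulAut.conj (g₂ * g₁)).toMonoidHom ≤ H := by
    rw [← hcomp]
    exact le_trans (Subgroup.map_mono h₁) h₂
  have heq := conj_eq_of_conj_le H hH (g₂ * g₁) hle
  have h3 : K.map (MulAut.conj g₂).toMonoidHom ≤
      (H.map (MulAut.conj g₁).toMonoidHom).map (MulAut.conj g₂).toMonoidHom := by
    rw [hcomp, heq]
    exact h₂
  exact (Subgroup.map_le_map_iff_of_injective (MulAut.conj g₂).injective).mp h3
end

section
/- For the standard 1-dimensional ℤ/2-representation V, with generator F₁ = id_V for the module C^∞_{ℤ/2}(V, V), the universal variety Σ = {(v, t) ∈ V × ℝ | t·v = 0} is the union of the two coordinate axes, and the graph map Γ_f(v, λ) = (v, 1 − h(v, λ)) of the map F(v,λ) = v·(1−h(v,λ)) is transverse at (0, λ) to the stratification {(0,0)} ∪ (Σ ∖ {(0,0)}) if and only if either h(0, λ) ≠ 1, or h(0, λ) = 1 and ∂_λ h(0, λ) ≠ 0. -/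
/-- For the sign representation of `ℤ/2` on `ℝ` with generator `F₁ = id`, the universal
variety `Σ = {(v, t) | t·v = 0}` is the union of the two coordinate axes, and the graph
map `Γ_f(v, λ) = (v, 1 − h(v, λ))` is transverse at `(0, λ)` to the stratification
`{(0,0)} ∪ (Σ ∖ {(0,0)})` iff either `h(0, λ) ≠ 1`, or `h(0, λ) = 1` and
`∂_λ h(0, λ) ≠ 0`.  Transversality to `{(0,0)}` means surjectivity of the differential;
transversality to the open stratum means the range of the differential together with the
tangent line of the stratum (the `t`-axis `{0} × ℝ`) spans `ℝ²`. -/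
theorem z2_graph_map_transversality_example {s : ℕ}
    (h : ℝ × (Fin s → ℝ) → ℝ) (hsm : ContDiff ℝ (⊤ : ℕ∞) h)
    (heven : ∀ (v : ℝ) (μ : Fin s → ℝ), h (-v, μ) = h (v, μ))
    (μ : Fin s → ℝ) :
    ({p : ℝ × ℝ | p.2 * p.1 = 0} = {p : ℝ × ℝ | p.1 = 0} ∪ {p : ℝ × ℝ | p.2 = 0}) ∧
    (((h (0, μ) = 1 →
        Function.Surjective
          (fderiv ℝ (fun p : ℝ × (Fin s → ℝ) => (p.1, 1 - h p)) (0, μ))) ∧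
      (h (0, μ) ≠ 1 →
        LinearMap.range
            ((fderiv ℝ (fun p : ℝ × (Fin s → ℝ) => (p.1, 1 - h p)) (0, μ) :
              ℝ × (Fin s → ℝ) →ₗ[ℝ] ℝ × ℝ)) ⊔
          ((⊥ : Submodule ℝ ℝ).prod (⊤ : Submodule ℝ ℝ)) = ⊤))
      ↔ (h (0, μ) ≠ 1 ∨
          (h (0, μ) = 1 ∧ fderiv ℝ (fun ν : Fin s → ℝ => h (0, ν)) μ ≠ 0))) := by
  have hd : Differentiable ℝ h := hsm.differentiable (by simp)
  set Dh := fderiv ℝ h (0, μ) with hDhdef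
  have hDh : HasFDerivAt h Dh (0, μ) := (hd (0, μ)).hasFDerivAt
  -- derivative of the graph map
  have hG : HasFDerivAt (fun p : ℝ × (Fin s → ℝ) => (p.1, 1 - h p))
      ((ContinuousLinearMap.fst ℝ ℝ (Fin s → ℝ)).prod (-Dh)) (0, μ) := by
    have h2 : HasFDerivAt (fun p : ℝ × (Fin s → ℝ) => 1 - h p) (-Dh) (0, μ) := by
      exact hDh.const_sub 1
    exact HasFDerivAt.prodMk (hasFDerivAt_fst) h2
  have hDG : fderiv ℝ (fun p : ℝ × (Fin s → ℝ) => (p.1, 1 - h p)) (0, μ)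
      = (ContinuousLinearMap.fst ℝ ℝ (Fin s → ℝ)).prod (-Dh) := hG.fderiv
  -- the partial derivative in v vanishes by evenness
  set A : ℝ →L[ℝ] ℝ :=
    Dh.comp ((ContinuousLinearMap.id ℝ ℝ).prod (0 : ℝ →L[ℝ] (Fin s → ℝ))) with hAdef
  have hA : HasFDerivAt (fun v : ℝ => h (v, μ)) A 0 :=
    hDh.comp 0 (HasFDerivAt.prodMk (hasFDerivAt_id (0 : ℝ)) (hasFDerivAt_const μ 0))
  have hAneg : HasFDerivAt (fun v : ℝ => h (v, μ)) (-A) 0 := by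
    have hneg : HasFDerivAt (fun v : ℝ => -v) (-(ContinuousLinearMap.id ℝ ℝ)) (0 : ℝ) :=
      (hasFDerivAt_id (0 : ℝ)).neg
    have hA' : HasFDerivAt (fun v : ℝ => h (v, μ)) A (-(0:ℝ)) := by simpa using hA
    have h3 := hA'.comp (0 : ℝ) (by simpa using hneg)
    have h4 : ((fun v : ℝ => h (v, μ)) ∘ fun v : ℝ => -v) = fun v : ℝ => h (v, μ) := by
      funext v; simp [Function.comp, heven]
    rw [h4] at h3
    simpa using h3
  have hAz : ∀ v : ℝ, A v = 0 := by
    have heq : -A = A := hAneg.unique hA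
    intro v
    have h1 : (-A) v = A v := by rw [heq]
    simp only [ContinuousLinearMap.neg_apply] at h1
    linarith
  have hv0 : ∀ v : ℝ, Dh (v, 0) = 0 := fun v => hAz v
  -- the λ-partial derivative
  set L := fderiv ℝ (fun ν : Fin s → ℝ => h (0, ν)) μ with hLdef
  have hLhas : HasFDerivAt (fun ν : Fin s → ℝ => h (0, ν))
      (Dh.comp ((0 : (Fin s → ℝ) →L[ℝ] ℝ).prod (ContinuousLinearMap.id ℝ (Fin s → ℝ)))) μ :=
    hDh.comp μ (HasFDerivAt.prodMk (hasFDerivAt_const (0 : ℝ) μ) (hasFDerivAt_id μ))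
  have hLeq : L = Dh.comp ((0 : (Fin s → ℝ) →L[ℝ] ℝ).prod (ContinuousLinearMap.id ℝ (Fin s → ℝ))) :=
    hLhas.fderiv
  have hLw : ∀ w : Fin s → ℝ, L w = Dh (0, w) := by
    intro w; rw [hLeq]; rfl
  have hDhsplit : ∀ (v : ℝ) (w : Fin s → ℝ), Dh (v, w) = L w := by
    intro v w
    have : (v, w) = ((v, 0) : ℝ × (Fin s → ℝ)) + (0, w) := by simp
    rw [this, map_add, hv0, hLw]; simp
  -- explicit formula for the differential
  have hDapp : ∀ (v : ℝ) (w : Fin s → ℝ),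
      (fderiv ℝ (fun p : ℝ × (Fin s → ℝ) => (p.1, 1 - h p)) (0, μ)) (v, w) = (v, -(L w)) := by
    intro v w
    rw [hDG]
    simp [hDhsplit]
  -- surjectivity iff L ≠ 0
  have hsurj : Function.Surjective
      (fderiv ℝ (fun p : ℝ × (Fin s → ℝ) => (p.1, 1 - h p)) (0, μ)) ↔ L ≠ 0 := by
    constructor
    · intro hs hL0
      obtain ⟨⟨v, w⟩, hp⟩ := hs (0, 1)
      rw [hDapp] at hp
      have := congrArg Prod.snd hp
      simp [hL0] at this
    · intro hL0 ⟨a, b⟩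
      have : ∃ w, L w ≠ 0 := by
        by_contra hc
        push_neg at hc
        exact hL0 (ContinuousLinearMap.ext fun w => by simpa using hc w)
      obtain ⟨w, hw⟩ := this
      refine ⟨(a, (-b / L w) • w), ?_⟩
      rw [hDapp]
      have : L ((-b / L w) • w) = -b := by
        rw [map_smul, smul_eq_mul]; field_simp
      rw [this]; simp
  -- the second condition always holds
  have hsup : LinearMap.range
      ((fderiv ℝ (fun p : ℝ × (Fin s → ℝ) => (p.1, 1 - h p)) (0, μ) :
        ℝ × (Fin s → ℝ) →ₗ[ℝ] ℝ × ℝ)) ⊔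
      ((⊥ : Submodule ℝ ℝ).prod (⊤ : Submodule ℝ ℝ)) = ⊤ := by
    rw [eq_top_iff]
    rintro ⟨a, b⟩ -
    refine Submodule.mem_sup.2 ⟨(a, 0), ⟨(a, 0), ?_⟩, (0, b), ?_, ?_⟩
    · rw [ContinuousLinearMap.coe_coe, hDapp]; simp
    · simp [Submodule.mem_prod]
    · simp
  refine ⟨?_, ?_⟩
  · ext ⟨a, b⟩
    simp only [Set.mem_setOf_eq, Set.mem_union, mul_eq_zero]
    tauto
  · constructor
    · rintro ⟨h1, _⟩
      by_cases hc : h (0, μ) = 1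
      · exact Or.inr ⟨hc, hsurj.mp (h1 hc)⟩
      · exact Or.inl hc
    · rintro (hc | ⟨hc, hne⟩)
      · exact ⟨fun h1 => absurd h1 hc, fun _ => hsup⟩
      · exact ⟨fun _ => hsurj.mpr hne, fun _ => hsup⟩
end

section
/- Let G = S¹ act on V = ℝ² by rotations. Every smooth S¹-equivariant map f : V → V can be written as f(x, y) = a(x,y)·(x, y) + b(x,y)·(−y, x) where a, b are smooth S¹-invariant real functions; i.e. the maps F₁(x,y) = (x,y) and F₂(x,y) = (−y,x) generate C^∞_{S¹}(V, V) over C^∞_{S¹}(V, ℝ). Moreover the universal variety Σ = {(x, y, s, t) | s·x − t·y = 0 and s·y + t·x = 0} equals ({0} × ℝ²) ∪ (ℝ² × {0}). -/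
open Complex

private lemma aux_f_zero (f : ℂ → ℂ) (heq : ∀ u z : ℂ, ‖u‖ = 1 → f (u * z) = u * f z) :
    f 0 = 0 := by
  have h : f 0 = -f 0 := by simpa using heq (-1) 0 (by simp)
  have h2 : f 0 + f 0 = 0 := by nth_rw 1 [h]; ring
  exact add_self_eq_zero.mp h2

private lemma aux_param (n : ℕ) : ∀ ψ : ℝ → ℝ → ℂ, ContDiff ℝ (⊤ : ℕ∞) (Function.uncurry ψ) →
    ContDiff ℝ n (fun t => ∫ s in (0:ℝ)..1, ψ t s) := by
  induction n with
  | zero =>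
    intro ψ hψ
    exact contDiff_zero.mpr
      (intervalIntegral.continuous_parametric_intervalIntegral_of_continuous' hψ.continuous 0 1)
  | succ n ih =>
    intro ψ hψ
    set ψ' : ℝ → ℝ → ℂ := fun t s => fderiv ℝ (Function.uncurry ψ) (t, s) (1, 0) with hψ'
    have hψ'c : ContDiff ℝ (⊤ : ℕ∞) (Function.uncurry ψ') := by
      have h1 : ContDiff ℝ (⊤ : ℕ∞) (fderiv ℝ (Function.uncurry ψ)) := hψ.fderiv_right (by simp)
      exact h1.clm_apply contDiff_const
    have hdiff : ∀ t s, HasDerivAt (fun t => ψ t s) (ψ' t s) t := by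
      intro t s
      have hd : HasFDerivAt (Function.uncurry ψ) (fderiv ℝ (Function.uncurry ψ) (t, s)) (t, s) :=
        ((hψ.differentiable (by simp)) (t, s)).hasFDerivAt
      have := hd.comp_hasDerivAt t ((hasDerivAt_id t).prodMk (hasDerivAt_const t s))
      simpa [Function.comp_def] using this
    have hder : ∀ t₀, HasDerivAt (fun t => ∫ s in (0:ℝ)..1, ψ t s)
        (∫ s in (0:ℝ)..1, ψ' t₀ s) t₀ := by
      intro t₀
      obtain ⟨C, hC⟩ := ((isCompact_closedBall t₀ 1).prod (isCompact_Icc (a := (0:ℝ)) (b := 1))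
        ).exists_bound_of_continuousOn hψ'c.continuous.continuousOn
      refine (intervalIntegral.hasDerivAt_integral_of_dominated_loc_of_deriv_le
        (bound := fun _ => C) (Metric.closedBall_mem_nhds t₀ one_pos) ?_ ?_ ?_ ?_ ?_ ?_).2
      · exact Filter.Eventually.of_forall fun t =>
          (hψ.continuous.comp (continuous_const.prodMk continuous_id)).aestronglyMeasurable
      · exact (hψ.continuous.comp (continuous_const.prodMk continuous_id)).intervalIntegrable _ _
      · exact (hψ'c.continuous.comp (continuous_const.prodMk continuous_id)).aestronglyMeasurable
      · refine Filter.Eventually.of_forall fun s hs t ht => hC (t, s) ⟨ht, ?_⟩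
        rw [Set.uIoc_of_le zero_le_one] at hs
        exact ⟨hs.1.le, hs.2⟩
      · exact intervalIntegrable_const
      · exact Filter.Eventually.of_forall fun s _ t _ => hdiff t s
    have hF : ContDiff ℝ n (deriv fun t => ∫ s in (0:ℝ)..1, ψ t s) := by
      have : deriv (fun t => ∫ s in (0:ℝ)..1, ψ t s) = fun t => ∫ s in (0:ℝ)..1, ψ' t s :=
        funext fun t => (hder t).deriv
      rw [this]
      exact ih ψ' hψ'c
    rw [Nat.cast_succ, contDiff_succ_iff_deriv]
    exact ⟨fun t => (hder t).differentiableAt, by simp, hF⟩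

private lemma aux_div (φ : ℝ → ℂ) (hφ : ContDiff ℝ (⊤ : ℕ∞) φ) (h0 : φ 0 = 0) :
    ∃ ψ : ℝ → ℂ, ContDiff ℝ (⊤ : ℕ∞) ψ ∧ ∀ t, φ t = t * ψ t := by
  have hd : ContDiff ℝ (⊤ : ℕ∞) (deriv φ) := (contDiff_infty_iff_deriv.mp hφ).2
  refine ⟨fun t => ∫ s in (0:ℝ)..1, deriv φ (t * s),
    contDiff_infty.mpr fun n => aux_param n _ (hd.comp (contDiff_fst.mul contDiff_snd)), ?_⟩
  intro t
  show φ t = (t:ℂ) * ∫ s in (0:ℝ)..1, deriv φ (t * s)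
  have hder : ∀ x ∈ Set.uIcc (0:ℝ) 1,
      HasDerivAt (fun s => φ (t * s)) (t • deriv φ (t * x)) x := by
    intro x _
    have h1 := ((hφ.differentiable (by simp)) (t * x)).hasDerivAt
    have h2 := h1.scomp x ((hasDerivAt_id x).const_mul t)
    have h3 : HasDerivAt (fun s => φ (t * s)) ((t * 1) • deriv φ (t * x)) x := h2
    rw [mul_one] at h3
    exact h3
  have hint : IntervalIntegrable (fun x => t • deriv φ (t * x)) MeasureTheory.volume 0 1 :=
    have hdc : Continuous (deriv φ) := hd.continuous
    (by fun_prop : Continuous fun x => t • deriv φ (t * x)).intervalIntegrable _ _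
  have := intervalIntegral.integral_eq_sub_of_hasDerivAt hder hint
  rw [intervalIntegral.integral_smul] at this
  simp only [mul_one, mul_zero, h0, sub_zero] at this
  rw [← this, Complex.real_smul]

private lemma aux_even (k : ℕ) : ∀ h : ℝ → ℂ, ContDiff ℝ (⊤ : ℕ∞) h → (∀ t, h (-t) = h t) →
    ContDiff ℝ k (fun z : ℂ => h ‖z‖) := by
  induction k with
  | zero => intro h hh _; exact contDiff_zero.mpr (hh.continuous.comp continuous_norm)
  | succ k ih =>
    intro h hh he
    have hd : ContDiff ℝ (⊤ : ℕ∞) (deriv h) := (contDiff_infty_iff_deriv.mp hh).2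
    have hodd : ∀ t, deriv h (-t) = - deriv h t := by
      intro t
      have h1 := deriv_comp_neg (f := h) (x := t)
      have hfun : (fun x => h (-x)) = h := funext he
      rw [hfun] at h1
      rw [h1, neg_neg]
    have hd0 : deriv h 0 = 0 := by
      have := hodd 0
      rw [neg_zero] at this
      linear_combination this / 2
    obtain ⟨h₁, hh₁, hh₁eq⟩ := aux_div (deriv h) hd hd0
    have he₁ : ∀ t, h₁ (-t) = h₁ t := by
      intro t
      rcases eq_or_ne t 0 with rfl | ht
      · simp
      · have := hh₁eq (-t)
        rw [hodd, hh₁eq t] at this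
        push_cast at this
        have htC : (t:ℂ) ≠ 0 := by exact_mod_cast ht
        exact mul_left_cancel₀ htC (by linear_combination this)
    have hIH := ih h₁ hh₁ he₁
    have hinner : ContDiff ℝ ⊤ (fun z : ℂ => innerSL ℝ z) := by
      exact (innerSL ℝ : ℂ →L[ℝ] ℂ →L[ℝ] ℝ).contDiff
    have hderiv : ∀ z : ℂ, HasFDerivAt (fun z : ℂ => h ‖z‖)
        ((innerSL ℝ z).smulRight (h₁ ‖z‖)) z := by
      intro z
      rcases eq_or_ne z 0 with rfl | hz
      · have h0' : HasFDerivAt (fun z : ℂ => h ‖z‖) (0 : ℂ →L[ℝ] ℂ) 0 := by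
          rw [hasFDerivAt_iff_isLittleO_nhds_zero]
          have hh0 : HasDerivAt h 0 0 := by
            rw [← hd0]; exact ((hh.differentiable (by simp)) 0).hasDerivAt
          have h1 := (hasDerivAt_iff_isLittleO_nhds_zero.mp hh0).comp_tendsto
            (tendsto_norm_zero : Filter.Tendsto (fun w : ℂ => ‖w‖) (nhds 0) (nhds 0))
          have h2 := h1.trans_isBigO
            (Asymptotics.isBigO_refl (fun w : ℂ => w) (nhds 0)).norm_left
          simpa [Function.comp_def] using h2
        convert h0' using 1
        ext v
        simp
      · have hn : HasFDerivAt (fun y : ℂ => Real.sqrt (‖y‖ ^ 2))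
            ((1 / (2 * Real.sqrt (‖z‖ ^ 2))) • (2 • innerSL ℝ z)) z :=
          (hasStrictFDerivAt_norm_sq z).hasFDerivAt.sqrt (by positivity)
        have hfun : (fun y : ℂ => Real.sqrt (‖y‖ ^ 2)) = fun y => ‖y‖ := by
          funext y; exact Real.sqrt_sq (norm_nonneg y)
        rw [hfun, Real.sqrt_sq (norm_nonneg z)] at hn
        have hc := ((hh.differentiable (by simp)) ‖z‖).hasDerivAt.hasFDerivAt.comp z hn
        refine hc.congr_fderiv ?_
        ext v
        have hzn : ‖z‖ ≠ 0 := norm_ne_zero_iff.mpr hz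
        have hznC : (‖z‖:ℂ) ≠ 0 := by exact_mod_cast hzn
        simp [hh₁eq]
        field_simp
    rw [Nat.cast_succ, contDiff_succ_iff_hasFDerivAt]
    exact ⟨fun z => (innerSL ℝ z).smulRight (h₁ ‖z‖),
      (hinner.of_le le_top).smulRight hIH, hderiv⟩

private lemma aux_main (f : ℂ → ℂ) (hf : ContDiff ℝ (⊤ : ℕ∞) f)
    (heq : ∀ u z : ℂ, ‖u‖ = 1 → f (u * z) = u * f z) :
    ∃ c : ℂ → ℂ, ContDiff ℝ (⊤ : ℕ∞) c ∧ (∀ u z : ℂ, ‖u‖ = 1 → c (u * z) = c z) ∧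
      ∀ z, f z = c z * z := by
  have hf0 : f 0 = 0 := aux_f_zero f heq
  have hφ : ContDiff ℝ (⊤ : ℕ∞) (fun t : ℝ => f t) := hf.comp Complex.ofRealCLM.contDiff
  obtain ⟨ψ, hψ, hψeq⟩ := aux_div (fun t : ℝ => f t) hφ (by simpa using hf0)
  have hψeq' : ∀ t : ℝ, f t = t * ψ t := hψeq
  have hψe : ∀ t, ψ (-t) = ψ t := by
    intro t
    rcases eq_or_ne t 0 with rfl | ht
    · simp
    · have h1 : f ((-t : ℝ) : ℂ) = - f (t : ℂ) := by
        have := heq (-1) (t : ℂ) (by simp)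
        simpa using this
      have h2 := hψeq' (-t)
      rw [h1, hψeq' t] at h2
      push_cast at h2
      have htC : (t:ℂ) ≠ 0 := by exact_mod_cast ht
      exact mul_left_cancel₀ htC (by linear_combination h2)
  refine ⟨fun z => ψ ‖z‖, contDiff_infty.mpr fun n => aux_even n ψ hψ hψe, ?_, ?_⟩
  · intro u z hu
    simp only [norm_mul, hu, one_mul]
  · intro z
    rcases eq_or_ne z 0 with rfl | hz0
    · simp [hf0]
    · show f z = ψ ‖z‖ * z
      set t : ℝ := ‖z‖ with htdef
      have ht0 : 0 < t := norm_pos_iff.mpr hz0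
      have htC : (t : ℂ) ≠ 0 := by exact_mod_cast ht0.ne'
      set u : ℂ := z / (t : ℂ) with hudef
      have hu1 : ‖u‖ = 1 := by
        rw [hudef, norm_div]
        simp only [Complex.norm_real, Real.norm_eq_abs, abs_of_pos ht0]
        exact div_self ht0.ne'
      have huz : u * (t : ℂ) = z := by
        rw [hudef]; field_simp
      have h1 : f z = u * f t := by rw [← heq u t hu1, huz]
      rw [h1, hψeq' t, ← huz]
      ring

/-- For the standard rotation action of `S¹` on `ℝ² ≅ ℂ`: every smooth `S¹`-equivariant
map `f : ℂ → ℂ` can be written as `f z = a(z)·z + b(z)·(i z)` with `a, b` smooth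
`S¹`-invariant real functions (i.e. `F₁(z) = z` and `F₂(z) = i z` generate
`C^∞_{S¹}(V, V)` over `C^∞_{S¹}(V, ℝ)`); moreover the universal variety
`Σ = {(z, s, t) | s·z + t·(i z) = 0}` equals `({0} × ℝ²) ∪ (ℝ² × {0})`. -/
theorem circle_equivariant_generators_and_universal_variety :
    (∀ f : ℂ → ℂ, ContDiff ℝ (⊤ : ℕ∞) f →
      (∀ u z : ℂ, ‖u‖ = 1 → f (u * z) = u * f z) →
      ∃ a b : ℂ → ℝ, ContDiff ℝ (⊤ : ℕ∞) a ∧ ContDiff ℝ (⊤ : ℕ∞) b ∧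
        (∀ u z : ℂ, ‖u‖ = 1 → a (u * z) = a z ∧ b (u * z) = b z) ∧
        (∀ z : ℂ, f z = (a z : ℂ) * z + (b z : ℂ) * (Complex.I * z))) ∧
    ({p : ℂ × ℝ × ℝ | (p.2.1 : ℂ) * p.1 + (p.2.2 : ℂ) * (Complex.I * p.1) = 0}
      = {p : ℂ × ℝ × ℝ | p.1 = 0} ∪ {p : ℂ × ℝ × ℝ | p.2 = 0}) := by
  constructor
  · intro f hf heq
    obtain ⟨c, hc, hinv, hfeq⟩ := aux_main f hf heq
    refine ⟨fun z => (c z).re, fun z => (c z).im,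
      Complex.reCLM.contDiff.comp hc, Complex.imCLM.contDiff.comp hc, ?_, ?_⟩
    · intro u z hu
      constructor <;> simp only [hinv u z hu]
    · intro z
      linear_combination (hfeq z) - z * (Complex.re_add_im (c z))
  · ext ⟨z, s, t⟩
    simp only [Set.mem_setOf_eq, Set.mem_union]
    constructor
    · intro h
      have h' : ((s:ℂ) + (t:ℂ) * Complex.I) * z = 0 := by linear_combination h
      rcases mul_eq_zero.mp h' with h'' | h''
      · right
        have hs : s = 0 := by simpa using congrArg Complex.re h''
        have ht : t = 0 := by simpa using congrArg Complex.im h''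
        simp [Prod.ext_iff, hs, ht]
      · left
        exact h''
    · rintro (h | h)
      · simp [h]
      · have hs : s = 0 := by simpa using congrArg Prod.fst h
        have ht : t = 0 := by simpa using congrArg Prod.snd h
        simp [hs, ht]
end
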